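/- arXiv:2110.01427 — 4 statements merged into one kernel-verified Lean document; each statement's English description precedes it below -/
import Mathlib

section
/- Suppose unconfoundedness holds at t = 0 (i.e. μ̄_0 = m_0). Then the conditional contrast of the observed outcome on the binarized indicator decomposes into a weighted average of treatment-specific conditional average effects plus a weighted average of treatment-specific selection effects: E[Y | A ∩ {D = 1}] − E[Y | A ∩ {D = 0}] = Σ_{t=1}^J (e_t / Σ_{s=1}^J e_s)·(m_t − m_0) + Σ_{t=1}^J (e_t / Σ_{s=1}^J e_s)·(μ̄_t − m_t). -/
/-! Conditionally on `A`, the event `{D = 1}` is the disjoint union of the events `{T = t}`,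
`1 ≤ t ≤ J`, so by the law of total expectation for conditional measures the treated mean is the
`e`-weighted average of the `μ̄_t`, while the untreated mean is `μ̄_0 = m_0`. Writing
`μ̄_t - m_0 = (m_t - m_0) + (μ̄_t - m_t)` and using that the weights sum to one gives the
decomposition. -/

open MeasureTheory ProbabilityTheory

namespace ProbabilityTheory

variable {Ω ι : Type*} [MeasurableSpace Ω] {μ : Measure Ω}

theorem _root_.MeasureTheory.Integrable.cond {E : Type*} [NormedAddCommGroup E] {f : Ω → E}
    (hf : Integrable f μ) (s : Set Ω) :
    Integrable f μ[|s] := by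
  rcases eq_or_ne (μ s) 0 with hs | hs
  · rw [cond_eq_zero_of_meas_eq_zero hs]
    exact integrable_zero_measure
  · exact hf.restrict.smul_measure (ENNReal.inv_ne_top.mpr hs)

variable [IsFiniteMeasure μ] {s : Finset ι} {S : ι → Set Ω}

theorem cond_biUnion_finset_eq_sum (hS : ∀ t ∈ s, MeasurableSet (S t))
    (hdisj : (s : Set ι).PairwiseDisjoint S) :
    μ[|⋃ t ∈ s, S t] = ∑ t ∈ s, μ[S t | ⋃ u ∈ s, S u] • μ[|S t] := by
  set U := ⋃ u ∈ s, S u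
  have hU : MeasurableSet U := Finset.measurableSet_biUnion s hS
  ext E hE
  have hUE : μ (U ∩ E) = ∑ t ∈ s, μ (S t ∩ E) := by
    rw [Set.iUnion₂_inter, measure_biUnion_finset
      (hdisj.mono fun t => Set.inter_subset_left) fun t ht => (hS t ht).inter hE]
  have hterm : ∀ t ∈ s, μ[S t | U] * μ[E | S t] = (μ U)⁻¹ * μ (S t ∩ E) := fun t ht => by
    rw [cond_apply hU, Set.inter_eq_right.mpr (Finset.subset_set_biUnion_of_mem ht), mul_assoc,
      mul_comm (μ (S t)), cond_mul_eq_inter (hS t ht)]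
  simp only [Measure.coe_finsetSum, Measure.coe_smul, Finset.sum_apply, Pi.smul_apply,
    smul_eq_mul]
  rw [Finset.sum_congr rfl hterm, ← Finset.mul_sum, ← hUE, cond_apply hU]

theorem integral_cond_biUnion_finset (hS : ∀ t ∈ s, MeasurableSet (S t))
    (hdisj : (s : Set ι).PairwiseDisjoint S) {f : Ω → ℝ} (hf : ∀ t ∈ s, Integrable f μ[|S t]) :
    ∫ x, f x ∂μ[|⋃ t ∈ s, S t]
      = ∑ t ∈ s, (μ (S t)).toReal / (∑ u ∈ s, (μ (S u)).toReal) * ∫ x, f x ∂μ[|S t] := by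
  have hU : MeasurableSet (⋃ u ∈ s, S u) := Finset.measurableSet_biUnion s hS
  have hweight : ∀ t ∈ s, (μ[S t | ⋃ u ∈ s, S u]).toReal
      = (μ (S t)).toReal / ∑ u ∈ s, (μ (S u)).toReal := fun t ht => by
    rw [cond_apply hU, Set.inter_eq_right.mpr (Finset.subset_set_biUnion_of_mem ht),
      measure_biUnion_finset hdisj hS, ENNReal.toReal_mul, ENNReal.toReal_inv,
      ENNReal.toReal_sum fun u _ => measure_ne_top μ (S u), inv_mul_eq_div]
  rw [cond_biUnion_finset_eq_sum hS hdisj, integral_finsetSum_measure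
    fun t ht => (hf t ht).smul_measure (measure_ne_top _ _)]
  refine Finset.sum_congr rfl fun t ht => ?_
  rw [integral_smul_measure, hweight t ht, smul_eq_mul]

theorem integral_cond_inter_biUnion_finset {A : Set Ω} (hA : MeasurableSet A)
    (hS : ∀ t ∈ s, MeasurableSet (S t)) (hdisj : (s : Set ι).PairwiseDisjoint S) {f : Ω → ℝ}
    (hf : ∀ t ∈ s, Integrable f μ[|A ∩ S t]) :
    ∫ x, f x ∂μ[|A ∩ ⋃ t ∈ s, S t]
      = ∑ t ∈ s, (μ[S t | A]).toReal / (∑ u ∈ s, (μ[S u | A]).toReal)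
          * ∫ x, f x ∂μ[|A ∩ S t] := by
  have hcond : ∀ t ∈ s, μ[|A][|S t] = μ[|A ∩ S t] := fun t ht =>
    cond_cond_eq_cond_inter hA (hS t ht) μ
  rw [← cond_cond_eq_cond_inter hA (Finset.measurableSet_biUnion s hS),
    integral_cond_biUnion_finset hS hdisj fun t ht => hcond t ht ▸ hf t ht]
  exact Finset.sum_congr rfl fun t ht => by rw [hcond t ht]

end ProbabilityTheory

theorem Finset.sum_mul_sub_add_sum_mul_sub {ι : Type*} {s : Finset ι} {w a b : ι → ℝ} {c : ℝ}
    (hw : ∑ t ∈ s, w t = 1) :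
    ∑ t ∈ s, w t * (a t - c) + ∑ t ∈ s, w t * (b t - a t) = ∑ t ∈ s, w t * b t - c := by
  calc _ = ∑ t ∈ s, (w t * b t - w t * c) := by
        rw [← Finset.sum_add_distrib]
        exact Finset.sum_congr rfl fun t _ => by ring
    _ = _ := by rw [Finset.sum_sub_distrib, ← Finset.sum_mul, hw, one_mul]

theorem setOf_ne_zero_eq_biUnion_Icc {α : Type*} {T : α → ℕ} {J : ℕ} (hT : ∀ x, T x ≤ J) :
    {x | T x ≠ 0} = ⋃ t ∈ Finset.Icc 1 J, {x | T x = t} := by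
  ext x
  simp only [Set.mem_ofPred_eq, Set.mem_iUnion, Finset.mem_Icc, exists_prop, exists_eq_right']
  have := hT x
  omega

theorem binarized_contrast_decomposition_with_selection_general
    {Ω : Type*} [MeasurableSpace Ω] (P : Measure Ω) [IsProbabilityMeasure P]
    (J : ℕ) (hJ : 1 ≤ J)
    (T : Ω → ℕ) (hT : Measurable T) (hTle : ∀ ω, T ω ≤ J)
    (Y : ℕ → Ω → ℝ) (hYint : ∀ t, Integrable (Y t) P)
    (A : Set Ω) (hA : MeasurableSet A)
    (hpos : ∀ t ≤ J, 0 < P (A ∩ {ω | T ω = t}))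
    (Yobs : Ω → ℝ)
    (hYobs : ∀ ω, Yobs ω = ∑ t ∈ Finset.range (J + 1), if T ω = t then Y t ω else 0)
    (e : ℕ → ℝ) (he : ∀ t, e t = ((P[|A]) {ω | T ω = t}).toReal)
    (m : ℕ → ℝ)
    (μbar : ℕ → ℝ)
    (hμbar : ∀ t, μbar t = ∫ ω, Y t ω ∂(P[|(A ∩ {ω | T ω = t})]))
    (hunconf0 : μbar 0 = m 0) :
    (∫ ω, Yobs ω ∂(P[|(A ∩ {ω | T ω ≠ 0})])) - (∫ ω, Yobs ω ∂(P[|(A ∩ {ω | T ω = 0})]))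
      = (∑ t ∈ Finset.Icc 1 J, (e t / (∑ s ∈ Finset.Icc 1 J, e s)) * (m t - m 0))
        + (∑ t ∈ Finset.Icc 1 J, (e t / (∑ s ∈ Finset.Icc 1 J, e s)) * (μbar t - m t)) := by
  have hF : ∀ t, MeasurableSet {ω | T ω = t} := fun t => hT (measurableSet_singleton t)
  have hYobs_ae : ∀ t ≤ J, Yobs =ᵐ[P[|A ∩ {ω | T ω = t}]] Y t := fun t ht =>
    ae_cond_of_forall_mem (hA.inter (hF t)) fun ω ⟨_, hω⟩ => by
      rw [hYobs, Finset.sum_ite_eq, if_pos (Finset.mem_range_succ_iff.mpr (hω ▸ ht)), hω]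
  have hYobs_cond : ∀ t ≤ J, ∫ ω, Yobs ω ∂P[|A ∩ {ω | T ω = t}] = μbar t := fun t ht =>
    (integral_congr_ae (hYobs_ae t ht)).trans (hμbar t).symm
  have hcontrast : ∫ ω, Yobs ω ∂P[|A ∩ {ω | T ω ≠ 0}]
      = ∑ t ∈ Finset.Icc 1 J, e t / (∑ s ∈ Finset.Icc 1 J, e s) * μbar t := by
    rw [setOf_ne_zero_eq_biUnion_Icc hTle, integral_cond_inter_biUnion_finset hA
      (fun t _ => hF t) (Set.pairwiseDisjoint_fiber T _)
      fun t ht => ((hYint t).cond _).congr (hYobs_ae t (Finset.mem_Icc.mp ht).2).symm]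
    simp only [← he]
    exact Finset.sum_congr rfl fun t ht => by rw [hYobs_cond t (Finset.mem_Icc.mp ht).2]
  have he_sum : ∑ s ∈ Finset.Icc 1 J, e s ≠ 0 := by
    refine (Finset.sum_pos' (fun s _ => he s ▸ ENNReal.toReal_nonneg)
      ⟨1, Finset.mem_Icc.mpr ⟨le_rfl, hJ⟩, ?_⟩).ne'
    rw [he]
    exact ENNReal.toReal_pos (cond_pos_of_inter_ne_zero hA (hpos 1 hJ).ne').ne'
      (measure_ne_top _ _)
  rw [hcontrast, hYobs_cond 0 (Nat.zero_le J), hunconf0,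
    Finset.sum_mul_sub_add_sum_mul_sub (by rw [← Finset.sum_div, div_self he_sum])]

/-- Under unconfoundedness at `t = 0`, the conditional contrast of the
observed outcome on the binarized indicator decomposes into a weighted average of
treatment-specific conditional average effects plus a weighted average of
treatment-specific selection effects. -/
theorem binarized_contrast_decomposition_with_selection
    {Ω : Type*} [MeasurableSpace Ω] (P : Measure Ω) [IsProbabilityMeasure P]
    (J : ℕ) (hJ : 1 ≤ J)
    (T : Ω → ℕ) (hT : Measurable T) (hTle : ∀ ω, T ω ≤ J)
    (Y : ℕ → Ω → ℝ) (hYmeas : ∀ t, Measurable (Y t)) (hYint : ∀ t, Integrable (Y t) P)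
    (A : Set Ω) (hA : MeasurableSet A)
    (hpos : ∀ t ≤ J, 0 < P (A ∩ {ω | T ω = t}))
    (Yobs : Ω → ℝ)
    (hYobs : ∀ ω, Yobs ω = ∑ t ∈ Finset.range (J + 1), if T ω = t then Y t ω else 0)
    (e : ℕ → ℝ) (he : ∀ t, e t = ((P[|A]) {ω | T ω = t}).toReal)
    (m : ℕ → ℝ) (hm : ∀ t, m t = ∫ ω, Y t ω ∂(P[|A]))
    (μbar : ℕ → ℝ)
    (hμbar : ∀ t, μbar t = ∫ ω, Y t ω ∂(P[|(A ∩ {ω | T ω = t})]))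
    (hunconf0 : μbar 0 = m 0) :
    (∫ ω, Yobs ω ∂(P[|(A ∩ {ω | T ω ≠ 0})])) - (∫ ω, Yobs ω ∂(P[|(A ∩ {ω | T ω = 0})]))
      = (∑ t ∈ Finset.Icc 1 J, (e t / (∑ s ∈ Finset.Icc 1 J, e s)) * (m t - m 0))
        + (∑ t ∈ Finset.Icc 1 J, (e t / (∑ s ∈ Finset.Icc 1 J, e s)) * (μbar t - m t)) :=
  binarized_contrast_decomposition_with_selection_general P J hJ T hT hTle Y hYint A hA hpos Yobs
    hYobs e he m μbar hμbar hunconf0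
end

section
/- Neyman orthogonality of the AIPW score (path-wise derivative form): let e, μ, a, b be real numbers with e ≠ 0, and define f : ℝ → ℝ by f(r) = (μ + r·a) + e·μ/(e + r·b) − e·(μ + r·a)/(e + r·b). Then f is differentiable at 0 with derivative f′(0) = 0. -/
/-!
Away from the pole, `f r = μ + (r a) (r b) / (e + r b)`: the score's error is the product of
the two nuisance errors, hence vanishes to second order at `r = 0`.
-/

open Filter Topology

theorem hasDerivAt_sq_smul_zero {𝕜 F : Type*} [NontriviallyNormedField 𝕜]
    [NormedAddCommGroup F] [NormedSpace 𝕜 F] {g : 𝕜 → F} (hg : DifferentiableAt 𝕜 g 0) :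
    HasDerivAt (fun r => r ^ 2 • g r) 0 0 :=
  ((hasDerivAt_pow 2 (0 : 𝕜)).smul hg.hasDerivAt).congr_deriv (by simp)

theorem aipw_score_eq_add_sq_mul_div {e μ a b r : ℝ} (hr : e + r * b ≠ 0) :
    (μ + r * a) + e * μ / (e + r * b) - e * (μ + r * a) / (e + r * b)
      = μ + r ^ 2 * (a * b / (e + r * b)) := by
  field_simp
  ring

/-- Neyman orthogonality of the AIPW score (path-wise derivative form):
the perturbed-nuisance conditional expectation `f(r)` has derivative `0` at `r = 0`. -/
theorem aipw_score_neyman_orthogonal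
    (e μ a b : ℝ) (he : e ≠ 0) :
    HasDerivAt (fun r : ℝ =>
      (μ + r * a) + e * μ / (e + r * b) - e * (μ + r * a) / (e + r * b)) 0 0 := by
  have hden : ContinuousAt (fun r : ℝ => e + r * b) 0 := by fun_prop
  have hpole : ∀ᶠ r in 𝓝 (0 : ℝ), e + r * b ≠ 0 :=
    hden.eventually_ne (by simpa using he)
  have hquot : DifferentiableAt ℝ (fun r : ℝ => a * b / (e + r * b)) 0 :=
    (differentiableAt_const _).div (by fun_prop) (by simpa using he)
  exact ((hasDerivAt_sq_smul_zero hquot).const_add μ).congr_of_eventuallyEq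
    (hpole.mono fun r hr => aipw_score_eq_add_sq_mul_div hr)
end

section
/- Neyman orthogonality of the nATE score (path-wise derivative form): let S be a nonempty finite index set and let μ, e, a, b : S → ℝ with Σ_{t∈S} e_t ≠ 0. Define f : ℝ → ℝ by f(r) = [ Σ_{t∈S} (μ_t + r·a_t)(e_t + r·b_t) ] / [ Σ_{t∈S} (e_t + r·b_t) ] + [ Σ_{t∈S} e_t·μ_t ] / [ Σ_{t∈S} (e_t + r·b_t) ] − [ Σ_{t∈S} e_t ]·[ Σ_{t∈S} (μ_t + r·a_t)(e_t + r·b_t) ] / [ Σ_{t∈S} (e_t + r·b_t) ]². Then f is differentiable at 0 with derivative f′(0) = 0. -/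
/-!
The score is `N/D + C/D - E·N/D²` along a path with `N(0) = C` and `D(0) = E`. Differentiating,
the `N'` contributions of the first and last terms cancel (`N'/E - E·N'/E²`), and so do the `D'`
contributions (`-C·D'/E² - C·D'/E² + 2·C·D'/E²`), whatever the path directions are.
-/

theorem hasDerivAt_div_add_div_sub_mul_div_sq {N D : ℝ → ℝ} {C E x : ℝ}
    (hN : DifferentiableAt ℝ N x) (hD : DifferentiableAt ℝ D x)
    (hNx : N x = C) (hDx : D x = E) (hE : E ≠ 0) :
    HasDerivAt (fun r => N r / D r + C / D r - E * N r / D r ^ 2) 0 x := by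
  have hN' := hN.hasDerivAt
  have hD' := hD.hasDerivAt
  have hDx0 : D x ≠ 0 := hDx ▸ hE
  have h := ((hN'.fun_div hD' hDx0).fun_add ((hasDerivAt_const x C).fun_div hD' hDx0)).fun_sub
    (((hasDerivAt_const x E).fun_mul hN').fun_div (hD'.fun_pow 2) (pow_ne_zero 2 hDx0))
  refine h.congr_deriv ?_
  rw [hNx, hDx]
  field_simp
  ring

theorem nATE_score_neyman_orthogonal_general
    {S : Type*} [Fintype S]
    (μ e a b : S → ℝ) (he : (∑ t, e t) ≠ 0) :
    HasDerivAt (fun r : ℝ =>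
      (∑ t, (μ t + r * a t) * (e t + r * b t)) / (∑ t, (e t + r * b t))
        + (∑ t, e t * μ t) / (∑ t, (e t + r * b t))
        - (∑ t, e t) * (∑ t, (μ t + r * a t) * (e t + r * b t))
            / (∑ t, (e t + r * b t)) ^ 2) 0 0 := by
  refine hasDerivAt_div_add_div_sub_mul_div_sq (by fun_prop) (by fun_prop) ?_ (by simp) he
  simp [mul_comm]

/-- Neyman orthogonality of the nATE score (path-wise derivative form):
the perturbed-nuisance conditional expectation `f(r)` has derivative `0` at `r = 0`. -/
theorem nATE_score_neyman_orthogonal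
    {S : Type*} [Fintype S] [Nonempty S]
    (μ e a b : S → ℝ) (he : (∑ t, e t) ≠ 0) :
    HasDerivAt (fun r : ℝ =>
      (∑ t, (μ t + r * a t) * (e t + r * b t)) / (∑ t, (e t + r * b t))
        + (∑ t, e t * μ t) / (∑ t, (e t + r * b t))
        - (∑ t, e t) * (∑ t, (μ t + r * a t) * (e t + r * b t))
            / (∑ t, (e t + r * b t)) ^ 2) 0 0 :=
  nATE_score_neyman_orthogonal_general μ e a b he
end

section
/- Neyman orthogonality of weighted combinations of AIPW scores (covering the rATE and Δ scores): let S be a nonempty finite index set and let w, μ, e, a, b : S → ℝ with e_t ≠ 0 for all t ∈ S. Define f : ℝ → ℝ by f(r) = Σ_{t∈S} w_t·[ (μ_t + r·a_t) + e_t·μ_t/(e_t + r·b_t) − e_t·(μ_t + r·a_t)/(e_t + r·b_t) ]. Then f is differentiable at 0 with derivative f′(0) = 0. -/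
/-! At the true nuisances the inverse-propensity corrections cancel, and the perturbed score
collapses to `μ + r² a b / (e + r b)`: the perturbation enters only quadratically, so its
derivative at `r = 0` vanishes, term by term. -/

section

variable {𝕜 : Type*} [NontriviallyNormedField 𝕜]

-- Written with `1 - e / (e + r b)` rather than `r b / (e + r b)` so that it holds even where
-- `e + r b = 0` (junk division).
lemma aipw_score_eq (μ e a b r : 𝕜) :
    (μ + r * a) + e * μ / (e + r * b) - e * (μ + r * a) / (e + r * b)
      = μ + r * (a * (1 - e / (e + r * b))) := by
  ring

lemma hasDerivAt_const_add_mul_of_apply_zero {g : 𝕜 → 𝕜} {g' : 𝕜} (c : 𝕜)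
    (hg : HasDerivAt g g' 0) (hg0 : g 0 = 0) :
    HasDerivAt (fun r => c + r * g r) 0 0 := by
  simpa [hg0] using ((hasDerivAt_id (0 : 𝕜)).mul hg).const_add c

lemma aipw_score_hasDerivAt_zero (μ a b : 𝕜) {e : 𝕜} (he : e ≠ 0) :
    HasDerivAt (fun r => (μ + r * a) + e * μ / (e + r * b) - e * (μ + r * a) / (e + r * b))
      0 0 := by
  simp only [aipw_score_eq]
  have hden : HasDerivAt (fun r => e + r * b) b 0 := by
    simpa using ((hasDerivAt_id (0 : 𝕜)).mul_const b).const_add e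
  have hratio := (hasDerivAt_const (0 : 𝕜) e).div hden (by simpa using he)
  exact hasDerivAt_const_add_mul_of_apply_zero μ ((hratio.const_sub 1).const_mul a)
    (by simp [he])

end

theorem weighted_aipw_scores_neyman_orthogonal_general
    {S : Type*} [Fintype S]
    (w μ e a b : S → ℝ) (he : ∀ t, e t ≠ 0) :
    HasDerivAt (fun r : ℝ =>
      ∑ t, w t * ((μ t + r * a t) + e t * μ t / (e t + r * b t)
        - e t * (μ t + r * a t) / (e t + r * b t))) 0 0 := by
  have hterm (t : S) := (aipw_score_hasDerivAt_zero (μ t) (a t) (b t) (he t)).const_mul (w t)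
  simpa using HasDerivAt.fun_sum fun t (_ : t ∈ Finset.univ) => hterm t

/-- Neyman orthogonality of weighted combinations of AIPW scores
(covering the rATE and Δ scores): the perturbed-nuisance conditional expectation
`f(r)` has derivative `0` at `r = 0`. -/
theorem weighted_aipw_scores_neyman_orthogonal
    {S : Type*} [Fintype S] [Nonempty S]
    (w μ e a b : S → ℝ) (he : ∀ t, e t ≠ 0) :
    HasDerivAt (fun r : ℝ =>
      ∑ t, w t * ((μ t + r * a t) + e t * μ t / (e t + r * b t)
        - e t * (μ t + r * a t) / (e t + r * b t))) 0 0 :=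
  weighted_aipw_scores_neyman_orthogonal_general w μ e a b he
end
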